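/- arXiv:2001.00397 — 4 statements merged into one kernel-verified Lean document; each statement's English description precedes it below -/
import Mathlib

section
/- Let y1, y2 > 0 with h = sqrt(y1 + y2 - y1*y2) > 0 and y2 > 1. Then the contour integral (h^2 i / (4π(y1+y2))) ∮_{|ξ|=1} (ξ^2-1)^2 / (ξ^2 (y2 - hξ)(ξ - h/y2)) dξ equals h^2 / ((y1+y2) y2). -/
/-!
With `c = h / y₂`, the factor `y₂ - h ξ` equals `-h (ξ - c⁻¹)`, so the integrand is `-h⁻¹` times
`(ξ² - 1)² / (ξ² (ξ - c) (ξ - c⁻¹))`. Since `0 < h < y₂`, the poles inside the unit circle are `0`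
(double, residue `c + c⁻¹`) and `c` (simple, residue `c - c⁻¹`), while `c⁻¹` lies outside. The
residues add up to `2c`, so the contour integral is `-4πi / y₂`, and the prefactor turns this into
`h² / ((y₁ + y₂) y₂)`.
-/

open Complex Metric Real

theorem circleIntegral_sub_inv_of_notMem_closedBall {c w : ℂ} {R : ℝ} (hR : 0 ≤ R)
    (hw : w ∉ closedBall c R) : (∮ z in C(c, R), (z - w)⁻¹) = 0 := by
  refine DiffContOnCl.circleIntegral_eq_zero hR (DifferentiableOn.diffContOnCl ?_)
  refine fun z hz => ((differentiableAt_id.sub_const w).inv ?_).differentiableWithinAt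
  exact sub_ne_zero.2 (ne_of_mem_of_not_mem (closure_ball_subset_closedBall hz) hw)

theorem sq_sub_one_sq_div_eq_partialFraction {c ξ : ℂ} (hc : c ≠ 0) (hξ : ξ ≠ 0) (hξc : ξ ≠ c)
    (hξc' : ξ ≠ c⁻¹) :
    (ξ ^ 2 - 1) ^ 2 / (ξ ^ 2 * (ξ - c) * (ξ - c⁻¹)) =
      1 + (c + c⁻¹) * (ξ - 0)⁻¹ + (ξ - 0) ^ (-2 : ℤ) + (c - c⁻¹) * (ξ - c)⁻¹ +
        (c⁻¹ - c) * (ξ - c⁻¹)⁻¹ := by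
  have h1 : ξ - c ≠ 0 := sub_ne_zero.2 hξc
  have h2 : ξ * c - 1 ≠ 0 := fun h => hξc' (eq_inv_of_mul_eq_one_left (sub_eq_zero.1 h))
  have hsub : ξ - c⁻¹ = (ξ * c - 1) / c := by field_simp
  rw [sub_zero, zpow_neg, zpow_ofNat, hsub]
  field_simp
  ring

theorem circleIntegral_sq_sub_one_sq_div_sub_inv {c : ℂ} (hc0 : c ≠ 0) (hc : ‖c‖ < 1) :
    (∮ ξ in C(0, 1), (ξ ^ 2 - 1) ^ 2 / (ξ ^ 2 * (ξ - c) * (ξ - c⁻¹))) = 4 * π * I * c := by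
  have hc_mem : c ∈ ball (0 : ℂ) 1 := mem_ball_zero_iff.2 hc
  have hc_inv : c⁻¹ ∉ closedBall (0 : ℂ) 1 := by
    rw [mem_closedBall_zero_iff, norm_inv, not_le]
    exact one_lt_inv_iff₀.2 ⟨norm_pos_iff.2 hc0, hc⟩
  have h0_sphere : (0 : ℂ) ∉ sphere (0 : ℂ) 1 := by simp
  have hc_sphere : c ∉ sphere (0 : ℂ) 1 := fun h => sphere_disjoint_ball.ne_of_mem h hc_mem rfl
  have hc_inv_sphere : c⁻¹ ∉ sphere (0 : ℂ) 1 := fun h => hc_inv (sphere_subset_closedBall h)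
  have hint : ∀ w ∉ sphere (0 : ℂ) 1, CircleIntegrable (fun ξ => (ξ - w)⁻¹) 0 1 := fun w hw =>
    circleIntegrable_sub_inv_iff.2 (Or.inr (by simpa using hw))
  have hint0 := hint 0 h0_sphere
  have hintc := hint c hc_sphere
  have hintc' := hint c⁻¹ hc_inv_sphere
  have hint2 : CircleIntegrable (fun ξ => (ξ - 0) ^ (-2 : ℤ)) 0 1 :=
    circleIntegrable_sub_zpow_iff.2 (Or.inr (Or.inr (by simp)))
  rw [circleIntegral.integral_congr zero_le_one fun ξ hξ =>
      sq_sub_one_sq_div_eq_partialFraction hc0 (ne_of_mem_of_not_mem hξ h0_sphere)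
        (ne_of_mem_of_not_mem hξ hc_sphere) (ne_of_mem_of_not_mem hξ hc_inv_sphere),
    circleIntegral.integral_add (by fun_prop) (by fun_prop),
    circleIntegral.integral_add (by fun_prop) (by fun_prop),
    circleIntegral.integral_add (by fun_prop) (by fun_prop),
    circleIntegral.integral_add (by fun_prop) (by fun_prop),
    circleIntegral.integral_const_mul, circleIntegral.integral_const_mul,
    circleIntegral.integral_const_mul,
    circleIntegral.integral_sub_inv_of_mem_ball (mem_ball_self one_pos),
    circleIntegral.integral_sub_inv_of_mem_ball hc_mem,
    circleIntegral_sub_inv_of_notMem_closedBall zero_le_one hc_inv,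
    circleIntegral.integral_sub_zpow_of_ne (by decide),
    (diffContOnCl_const (c := (1 : ℂ))).circleIntegral_eq_zero zero_le_one]
  ring

theorem circleIntegral_sq_sub_one_sq_div_sub_mul {a b : ℂ} (ha : a ≠ 0) (hab : ‖a‖ < ‖b‖) :
    (∮ ξ in C(0, 1), (ξ ^ 2 - 1) ^ 2 / (ξ ^ 2 * (b - a * ξ) * (ξ - a / b))) = -4 * π * I / b := by
  have hb : b ≠ 0 := norm_pos_iff.1 ((norm_nonneg a).trans_lt hab)
  have hc : ‖a / b‖ < 1 := by rwa [norm_div, div_lt_one ((norm_nonneg a).trans_lt hab)]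
  have hfactor : ∀ ξ : ℂ, b - a * ξ = -a * (ξ - (a / b)⁻¹) := fun ξ => by field_simp; ring
  have hintegrand : ∀ ξ : ℂ, (ξ ^ 2 - 1) ^ 2 / (ξ ^ 2 * (b - a * ξ) * (ξ - a / b)) =
      (-a)⁻¹ * ((ξ ^ 2 - 1) ^ 2 / (ξ ^ 2 * (ξ - a / b) * (ξ - (a / b)⁻¹))) := fun ξ => by
    simp only [hfactor, div_eq_mul_inv, mul_inv]; ring
  simp_rw [hintegrand]
  rw [circleIntegral.integral_const_mul,
    circleIntegral_sq_sub_one_sq_div_sub_inv (div_ne_zero ha hb) hc]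
  field_simp

theorem stmt2 (y1 y2 h : ℝ) (hy1 : 0 < y1) (hy2 : 1 < y2)
    (hpos : 0 < y1 + y2 - y1 * y2) (hh : h = Real.sqrt (y1 + y2 - y1 * y2)) :
    ((h : ℂ) ^ 2 * Complex.I / (4 * (Real.pi : ℂ) * ((y1 : ℂ) + (y2 : ℂ)))) *
      (∮ ξ in C((0 : ℂ), 1), (ξ ^ 2 - 1) ^ 2 /
        (ξ ^ 2 * ((y2 : ℂ) - (h : ℂ) * ξ) * (ξ - (h : ℂ) / (y2 : ℂ))))
    = ((h ^ 2 / ((y1 + y2) * y2) : ℝ) : ℂ) := by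
  have hh0 : 0 < h := hh ▸ Real.sqrt_pos.2 hpos
  have hhy : h < y2 := by
    have : h ^ 2 = y1 + y2 - y1 * y2 := hh ▸ Real.sq_sqrt hpos.le
    nlinarith
  have hy12 : (y1 : ℂ) + y2 ≠ 0 := by exact_mod_cast (by linarith : y1 + y2 ≠ 0)
  rw [circleIntegral_sq_sub_one_sq_div_sub_mul (ofReal_ne_zero.2 hh0.ne')
    (by simpa [abs_of_pos hh0, abs_of_pos (hh0.trans hhy)] using hhy)]
  push_cast
  field_simp
  rw [I_sq]
  ring
end

section
/- Let y1, y2 > 0 with y2 ≠ 1 and set h = sqrt(y1 + y2 - y1 y2) > 0. For ξ on the unit circle, if m3 = -(1 + h/ξ)/(1 - y2) and z = -m3(m3 + 1 - y1)/((1 - y2) m3 + 1), then with α = y1/y2 one has z/(α + z) = y2 |1 + hξ|^2 / |y2 + hξ|^2 and 1 - z/(α + z) = y1 (y2 - 1)^2 / |y2 + hξ|^2. -/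
/-!
With `h² = y1 + y2 - y1 y2` the substitution collapses to `z = (1 + hξ)(1 + h/ξ) / (1 - y2)²`, and
the same relation gives
`(y2 + hξ)(y2 + h/ξ) - y2 (1 + hξ)(1 + h/ξ) = y1 (1 - y2)²`,
so `α + z = (y2 + hξ)(y2 + h/ξ) / (y2 (1 - y2)²)`. On the unit circle `1/ξ = conj ξ`, hence
`(a + bξ)(a + b/ξ) = |a + bξ|²` for real `a, b`, which turns both quotients into the stated moduli.
-/

section FieldIdentities

variable {K : Type*} [Field K] {y1 y2 h ξ : K}

theorem neg_mul_div_eq_of_eq_neg_div {m : K} (hξ : ξ ≠ 0) (hh2 : h ^ 2 = y1 + y2 - y1 * y2)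
    (h1y2 : 1 - y2 ≠ 0) (hh : h ≠ 0) (hm : m = -(1 + h / ξ) / (1 - y2)) :
    -m * (m + 1 - y1) / ((1 - y2) * m + 1) = (1 + h * ξ) * (1 + h * ξ⁻¹) / (1 - y2) ^ 2 := by
  have hden : (1 - y2) * m + 1 = -(h / ξ) := by
    rw [hm]
    field_simp
    ring
  rw [hden, hm]
  field_simp
  linear_combination (-(ξ * (ξ + h))) * hh2

theorem add_mul_add_inv_sub_mul_eq (hξ : ξ ≠ 0) (hh2 : h ^ 2 = y1 + y2 - y1 * y2) :
    (y2 + h * ξ) * (y2 + h * ξ⁻¹) - y2 * ((1 + h * ξ) * (1 + h * ξ⁻¹)) = y1 * (1 - y2) ^ 2 := by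
  field_simp
  linear_combination (1 - y2) * ξ * hh2

theorem div_div_add_div_eq {c w u : K} (hy2 : y2 ≠ 0) (hc : c ≠ 0)
    (huw : u - y2 * w = y1 * c ^ 2) :
    w / c ^ 2 / (y1 / y2 + w / c ^ 2) = y2 * w / u := by
  have hsum : y1 / y2 + w / c ^ 2 = u / (y2 * c ^ 2) := by
    rw [sub_eq_iff_eq_add.mp huw]
    field_simp
  rw [hsum, div_div_eq_mul_div]
  field_simp

end FieldIdentities

theorem Complex.ofReal_norm_add_mul_sq {ξ : ℂ} (hξ : ‖ξ‖ = 1) (a b : ℝ) :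
    ((‖(a : ℂ) + b * ξ‖ ^ 2 : ℝ) : ℂ) = (a + b * ξ) * (a + b * ξ⁻¹) := by
  rw [Complex.inv_eq_conj hξ, Complex.ofReal_pow, ← Complex.mul_conj']
  simp

theorem stmt5_general (y1 y2 h α : ℝ) (ξ m3 z : ℂ) (hy2 : 0 < y2)
    (hy2ne : y2 ≠ 1) (hpos : 0 < y1 + y2 - y1 * y2)
    (hh : h = Real.sqrt (y1 + y2 - y1 * y2)) (hα : α = y1 / y2)
    (hξ : ‖ξ‖ = 1)
    (hm3 : m3 = -(1 + (h : ℂ) / ξ) / (1 - (y2 : ℂ)))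
    (hz : z = -m3 * (m3 + 1 - (y1 : ℂ)) / ((1 - (y2 : ℂ)) * m3 + 1))
    (hden3 : (y2 : ℂ) + (h : ℂ) * ξ ≠ 0) :
    z / ((α : ℂ) + z)
        = ((y2 * ‖1 + (h : ℂ) * ξ‖ ^ 2 / ‖(y2 : ℂ) + (h : ℂ) * ξ‖ ^ 2 : ℝ) : ℂ) ∧
    1 - z / ((α : ℂ) + z)
        = ((y1 * (y2 - 1) ^ 2 / ‖(y2 : ℂ) + (h : ℂ) * ξ‖ ^ 2 : ℝ) : ℂ) := by
  have hξ0 : ξ ≠ 0 := norm_ne_zero_iff.mp (by simp [hξ])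
  have hh0 : (h : ℂ) ≠ 0 := Complex.ofReal_ne_zero.mpr (hh ▸ (Real.sqrt_pos.mpr hpos).ne')
  have hy2c : 1 - (y2 : ℂ) ≠ 0 := sub_ne_zero.mpr (by exact_mod_cast hy2ne.symm)
  have hh2 : (h : ℂ) ^ 2 = y1 + y2 - y1 * y2 := by
    exact_mod_cast hh ▸ Real.sq_sqrt hpos.le
  have hnum := Complex.ofReal_norm_add_mul_sq hξ 1 h
  rw [Complex.ofReal_one] at hnum
  have hden := Complex.ofReal_norm_add_mul_sq hξ y2 h
  have huw : ((‖(y2 : ℂ) + h * ξ‖ ^ 2 : ℝ) : ℂ) - y2 * ((‖1 + (h : ℂ) * ξ‖ ^ 2 : ℝ) : ℂ)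
      = y1 * (1 - y2) ^ 2 := by
    rw [hnum, hden]
    exact add_mul_add_inv_sub_mul_eq hξ0 hh2
  have hquot : z / ((α : ℂ) + z) = y2 * ((‖1 + (h : ℂ) * ξ‖ ^ 2 : ℝ) : ℂ) /
      ((‖(y2 : ℂ) + h * ξ‖ ^ 2 : ℝ) : ℂ) := by
    rw [hz, neg_mul_div_eq_of_eq_neg_div hξ0 hh2 hy2c hh0 hm3, hα, Complex.ofReal_div, ← hnum]
    exact div_div_add_div_eq (by exact_mod_cast hy2.ne') hy2c huw
  have hden0 : ((‖(y2 : ℂ) + h * ξ‖ ^ 2 : ℝ) : ℂ) ≠ 0 := by simpa using hden3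
  rw [hquot, one_sub_div hden0, huw]
  constructor <;> push_cast <;> ring

theorem stmt5 (y1 y2 h α : ℝ) (ξ m3 z : ℂ) (hy1 : 0 < y1) (hy2 : 0 < y2)
    (hy2ne : y2 ≠ 1) (hpos : 0 < y1 + y2 - y1 * y2)
    (hh : h = Real.sqrt (y1 + y2 - y1 * y2)) (hα : α = y1 / y2)
    (hξ : ‖ξ‖ = 1) (hξ0 : ξ ≠ 0)
    (hm3 : m3 = -(1 + (h : ℂ) / ξ) / (1 - (y2 : ℂ)))
    (hz : z = -m3 * (m3 + 1 - (y1 : ℂ)) / ((1 - (y2 : ℂ)) * m3 + 1))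
    (hden1 : (1 - (y2 : ℂ)) * m3 + 1 ≠ 0)
    (hden2 : (α : ℂ) + z ≠ 0)
    (hden3 : (y2 : ℂ) + (h : ℂ) * ξ ≠ 0) :
    z / ((α : ℂ) + z)
        = ((y2 * ‖1 + (h : ℂ) * ξ‖ ^ 2 / ‖(y2 : ℂ) + (h : ℂ) * ξ‖ ^ 2 : ℝ) : ℂ) ∧
    1 - z / ((α : ℂ) + z)
        = ((y1 * (y2 - 1) ^ 2 / ‖(y2 : ℂ) + (h : ℂ) * ξ‖ ^ 2 : ℝ) : ℂ) :=
  stmt5_general y1 y2 h α ξ m3 z hy2 hy2ne hpos hh hα hξ hm3 hz hden3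
end

section
/- Let y1, y2 > 0, y2 > 1, h = sqrt(y1+y2-y1y2) > 0. Then lim_{r↓1} (1/(2πi)) ∮_{|ξ|=1} y1 · [y2(1+hrξ)(1+h/(rξ))/((y2+hrξ)(y2+h/(rξ)))] · ((1-y2)^2 h / y2^3) · ξ/(ξ + h/(y2 r))^3 dξ = y1^2 y2^2 h^2/(y1+y2)^4. -/
/-!
For `1 < r < y2 / h` the integrand on `|ξ| = 1` is a constant multiple of
`p(ξ) / ((ξ - b) (ξ - a)^4)` with the cubic `p(ξ) = (ξ + 1/(hr)) (ξ + h/r) ξ`, the pole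
`a = -h/(y2 r)` inside and `b = -y2/(hr)` outside the unit disc. Expanding `p` in powers of
`ξ - a` reduces the integral to the integrals of `1 / ((ξ - b) (ξ - a)^m)`, `m ≥ 1`, which partial
fractions evaluate to `-2πi / (b - a)^m`; altogether the integral is `-2πi p(b) / (b - a)^4` times
the constant. Using `h² = y1 + y2 - y1 y2`, this is `2πi r y1² y2² h² / (y1 + y2)⁴`, so the
expression is linear in `r` and the limit `r ↓ 1` is immediate.
-/

open Filter Metric Complex Polynomial Real

section CircleIntegral

variable {c a b z : ℂ} {R : ℝ}

lemma sub_ne_zero_of_mem_sphere_of_mem_ball (hz : z ∈ sphere c R) (ha : a ∈ ball c R) :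
    z - a ≠ 0 :=
  sub_ne_zero.2 (sphere_disjoint_ball.ne_of_mem hz ha)

lemma sub_ne_zero_of_mem_sphere_of_notMem_closedBall (hz : z ∈ sphere c R)
    (hb : b ∉ closedBall c R) : z - b ≠ 0 :=
  sub_ne_zero.2 (ne_of_mem_of_not_mem (sphere_subset_closedBall hz) hb)

lemma circleIntegrable_inv_sub_mul_sub_pow (ha : a ∈ ball c R) (hb : b ∉ closedBall c R)
    (n : ℕ) : CircleIntegrable (fun z ↦ ((z - b) * (z - a) ^ n)⁻¹) c R := by
  refine ContinuousOn.circleIntegrable (pos_of_mem_ball ha).le ?_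
  refine (by fun_prop : Continuous fun z : ℂ ↦ (z - b) * (z - a) ^ n).continuousOn.inv₀ ?_
  intro z hz
  exact mul_ne_zero (sub_ne_zero_of_mem_sphere_of_notMem_closedBall hz hb)
    (pow_ne_zero _ (sub_ne_zero_of_mem_sphere_of_mem_ball hz ha))

namespace circleIntegral

theorem integral_sub_inv_of_notMem_closedBall (hR : 0 ≤ R) (hb : b ∉ closedBall c R) :
    ∮ z in C(c, R), (z - b)⁻¹ = 0 := by
  refine DiffContOnCl.circleIntegral_eq_zero hR ?_
  refine (DifferentiableOn.mono ?_ closure_ball_subset_closedBall).diffContOnCl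
  exact (differentiableOn_id.sub_const b).inv fun z hz ↦ sub_ne_zero.2 fun h ↦ hb (h ▸ hz)

theorem integral_inv_sub_mul_sub_pow (ha : a ∈ ball c R) (hb : b ∉ closedBall c R)
    {n : ℕ} (hn : n ≠ 0) :
    ∮ z in C(c, R), ((z - b) * (z - a) ^ n)⁻¹ = -(2 * π * I) / (b - a) ^ n := by
  have hR : 0 ≤ R := (pos_of_mem_ball ha).le
  have hab : b - a ≠ 0 := sub_ne_zero.2 fun h ↦ hb (h ▸ ball_subset_closedBall ha)
  have peel_power (n : ℕ) : ∮ z in C(c, R), ((z - b) * (z - a) ^ (n + 1))⁻¹ =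
      ((∮ z in C(c, R), ((z - b) * (z - a) ^ n)⁻¹) - ∮ z in C(c, R), (z - a) ^ (-(n + 1 : ℤ))) /
        (b - a) := by
    have hpow : CircleIntegrable (fun z ↦ (z - a) ^ (-(n + 1 : ℤ))) c R := by
      refine circleIntegrable_sub_zpow_iff.2 (Or.inr (Or.inr ?_))
      rw [abs_of_nonneg hR]
      exact fun h ↦ sphere_disjoint_ball.ne_of_mem h ha rfl
    rw [← integral_sub (circleIntegrable_inv_sub_mul_sub_pow ha hb n) hpow,
      div_eq_mul_inv, mul_comm, ← integral_const_mul]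
    refine integral_congr hR fun z hz ↦ ?_
    have hzb := sub_ne_zero_of_mem_sphere_of_notMem_closedBall hz hb
    have hza := sub_ne_zero_of_mem_sphere_of_mem_ball hz ha
    simp only [zpow_neg, ← Nat.cast_succ, zpow_natCast]
    field_simp
    ring
  obtain ⟨m, rfl⟩ := Nat.exists_eq_add_one_of_ne_zero hn
  induction m with
  | zero =>
    rw [peel_power 0]
    simp only [pow_zero, mul_one, CharP.cast_eq_zero, zero_add, zpow_neg_one, pow_one,
      integral_sub_inv_of_notMem_closedBall hR hb, integral_sub_inv_of_mem_ball ha, zero_sub]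
  | succ m ih =>
    rw [peel_power, ih m.succ_ne_zero, integral_sub_zpow_of_ne (by omega), sub_zero,
      pow_succ _ (m + 1), div_div]

theorem integral_eval_div_sub_mul_sub_pow (ha : a ∈ ball c R) (hb : b ∉ closedBall c R)
    {p : ℂ[X]} {n : ℕ} (hp : p.natDegree < n) :
    ∮ z in C(c, R), p.eval z / ((z - b) * (z - a) ^ n) =
      -(2 * π * I) * p.eval b / (b - a) ^ n := by
  have hab : b - a ≠ 0 := sub_ne_zero.2 fun h ↦ hb (h ▸ ball_subset_closedBall ha)
  have taylor_sum (z : ℂ) :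
      p.eval z = ∑ k ∈ Finset.range n, (taylor a p).coeff k * (z - a) ^ k := by
    rw [← eval_eq_sum_range' ((natDegree_taylor p a).trans_lt hp), taylor_eval, sub_add_cancel]
  have pow_split {k : ℕ} (hk : k ∈ Finset.range n) (w : ℂ) : w ^ n = w ^ k * w ^ (n - k) := by
    rw [← pow_add, Nat.add_sub_cancel' (Finset.mem_range.1 hk).le]
  calc ∮ z in C(c, R), p.eval z / ((z - b) * (z - a) ^ n)
      = ∮ z in C(c, R), ∑ k ∈ Finset.range n,
          (taylor a p).coeff k * ((z - b) * (z - a) ^ (n - k))⁻¹ := by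
        refine integral_congr (pos_of_mem_ball ha).le fun z hz ↦ ?_
        have hzb := sub_ne_zero_of_mem_sphere_of_notMem_closedBall hz hb
        have hza := sub_ne_zero_of_mem_sphere_of_mem_ball hz ha
        rw [taylor_sum, Finset.sum_div]
        refine Finset.sum_congr rfl fun k hk ↦ ?_
        rw [pow_split hk]
        field_simp
    _ = ∑ k ∈ Finset.range n, (taylor a p).coeff k * (-(2 * π * I) / (b - a) ^ (n - k)) := by
        rw [integral_fun_sum
          (f := fun k z ↦ (taylor a p).coeff k * ((z - b) * (z - a) ^ (n - k))⁻¹)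
          fun k _ ↦ (circleIntegrable_inv_sub_mul_sub_pow ha hb (n - k)).const_fun_smul]
        refine Finset.sum_congr rfl fun k hk ↦ ?_
        rw [integral_const_mul,
          integral_inv_sub_mul_sub_pow ha hb (Nat.sub_ne_zero_of_lt (Finset.mem_range.1 hk))]
    _ = -(2 * π * I) * p.eval b / (b - a) ^ n := by
        rw [taylor_sum, Finset.mul_sum, Finset.sum_div]
        refine Finset.sum_congr rfl fun k hk ↦ ?_
        rw [pow_split hk]
        field_simp

end circleIntegral

end CircleIntegral

lemma deltaOne_integrand_eq (Y1 Y2 H R K ξ : ℂ) (hY2 : Y2 ≠ 0) (hH : H ≠ 0) (hR : R ≠ 0)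
    (hξ : ξ ≠ 0) (hb : ξ + Y2 / (H * R) ≠ 0) (ha : ξ + H / (Y2 * R) ≠ 0) :
    Y1 * (Y2 * (1 + H * R * ξ) * (1 + H / (R * ξ)) / ((Y2 + H * R * ξ) * (Y2 + H / (R * ξ)))) *
        K * (ξ / (ξ + H / (Y2 * R)) ^ 3) =
      Y1 * K * ((ξ + 1 / (H * R)) * (ξ + H / R) * ξ /
        ((ξ + Y2 / (H * R)) * (ξ + H / (Y2 * R)) ^ 4)) := by
  have hb' : H * R * ξ + Y2 ≠ 0 := by
    contrapose! hb; field_simp; linear_combination hb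
  have hb'' : Y2 + H * R * ξ ≠ 0 := by rwa [add_comm]
  have ha' : Y2 * R * ξ + H ≠ 0 := by
    contrapose! ha; field_simp; linear_combination ha
  field_simp
  ring

lemma deltaOne_residue_eq (y1 y2 h r : ℝ) (hy2 : y2 ≠ 0) (hy21 : y2 ≠ 1) (hy12 : y1 + y2 ≠ 0)
    (hh : h ≠ 0) (hr : r ≠ 0) (hh2 : h ^ 2 = y1 + y2 - y1 * y2) :
    -(y1 * ((1 - y2) ^ 2 * h / y2 ^ 3)) *
        ((-(y2 / (h * r)) + 1 / (h * r)) * (-(y2 / (h * r)) + h / r) * -(y2 / (h * r)) /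
          (-(y2 / (h * r)) + h / (y2 * r)) ^ 4) =
      r * (y1 ^ 2 * y2 ^ 2 * h ^ 2 / (y1 + y2) ^ 4) := by
  have e1 : -(y2 / (h * r)) + 1 / (h * r) = (1 - y2) / (h * r) := by field_simp; ring
  have e2 : -(y2 / (h * r)) + h / r = y1 * (1 - y2) / (h * r) := by
    field_simp; linear_combination hh2
  have e3 : -(y2 / (h * r)) + h / (y2 * r) = (y1 + y2) * (1 - y2) / (y2 * h * r) := by
    field_simp; linear_combination hh2
  have hy21' : 1 - y2 ≠ 0 := sub_ne_zero.2 (Ne.symm hy21)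
  rw [e1, e2, e3]
  field_simp

theorem deltaOne_contour_integral_eq (y1 y2 h r : ℝ) (hy1 : 0 < y1) (hy2 : 1 < y2) (hh : 0 < h)
    (hh2 : h ^ 2 = y1 + y2 - y1 * y2) (hr : 0 < r) (ha : h < y2 * r) (hb : h * r < y2) :
    (1 / (2 * (Real.pi : ℂ) * Complex.I)) *
        ∮ ξ in C((0 : ℂ), 1),
          (y1 : ℂ) *
          ((y2 : ℂ) * (1 + (h : ℂ) * (r : ℂ) * ξ) * (1 + (h : ℂ) / ((r : ℂ) * ξ)) /
            (((y2 : ℂ) + (h : ℂ) * (r : ℂ) * ξ) * ((y2 : ℂ) + (h : ℂ) / ((r : ℂ) * ξ)))) *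
          (((1 - y2) ^ 2 * h / y2 ^ 3 : ℝ) : ℂ) *
          (ξ / (ξ + (h : ℂ) / ((y2 : ℂ) * (r : ℂ))) ^ 3)
      = r * ((y1 ^ 2 * y2 ^ 2 * h ^ 2 / (y1 + y2) ^ 4 : ℝ) : ℂ) := by
  have hy2' : 0 < y2 := by linarith
  set K : ℂ := (((1 - y2) ^ 2 * h / y2 ^ 3 : ℝ) : ℂ)
  set a : ℂ := ((-(h / (y2 * r)) : ℝ) : ℂ)
  set b : ℂ := ((-(y2 / (h * r)) : ℝ) : ℂ)
  set p : ℂ[X] := (X + C ((1 / (h * r) : ℝ) : ℂ)) * (X + C ((h / r : ℝ) : ℂ)) * X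
  have ha_mem : a ∈ ball 0 1 := by
    rw [mem_ball_zero_iff, norm_real, norm_neg, Real.norm_of_nonneg (by positivity),
      div_lt_one (by positivity)]
    exact ha
  have hb_mem : b ∉ closedBall 0 1 := by
    rw [mem_closedBall_zero_iff, norm_real, norm_neg, Real.norm_of_nonneg (by positivity),
      div_le_one (by positivity), not_le]
    exact hb
  have h_integrand : Set.EqOn (fun ξ ↦ (y1 : ℂ) *
          ((y2 : ℂ) * (1 + (h : ℂ) * (r : ℂ) * ξ) * (1 + (h : ℂ) / ((r : ℂ) * ξ)) /
            (((y2 : ℂ) + (h : ℂ) * (r : ℂ) * ξ) * ((y2 : ℂ) + (h : ℂ) / ((r : ℂ) * ξ)))) * K *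
          (ξ / (ξ + (h : ℂ) / ((y2 : ℂ) * (r : ℂ))) ^ 3))
      (fun ξ ↦ y1 * K * (p.eval ξ / ((ξ - b) * (ξ - a) ^ 4))) (sphere 0 1) := by
    intro ξ hξ
    have hξb := sub_ne_zero_of_mem_sphere_of_notMem_closedBall hξ hb_mem
    have hξa := sub_ne_zero_of_mem_sphere_of_mem_ball hξ ha_mem
    have hξ0 : ξ ≠ 0 := ne_zero_of_mem_sphere one_ne_zero ⟨ξ, hξ⟩
    simp only [p, a, b, eval_mul, eval_add, eval_X, eval_C, ofReal_neg, ofReal_div, ofReal_mul,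
      ofReal_one, sub_neg_eq_add] at hξa hξb ⊢
    exact deltaOne_integrand_eq _ _ _ _ _ _ (by exact_mod_cast hy2'.ne')
      (by exact_mod_cast hh.ne') (by exact_mod_cast hr.ne') hξ0 hξb hξa
  rw [circleIntegral.integral_congr zero_le_one h_integrand, circleIntegral.integral_const_mul,
    circleIntegral.integral_eval_div_sub_mul_sub_pow ha_mem hb_mem
      (Nat.lt_succ_of_le (by simp only [p]; compute_degree))]
  calc 1 / (2 * (π : ℂ) * I) * (y1 * K * (-(2 * π * I) * p.eval b / (b - a) ^ 4))
      = -(y1 * K) * (p.eval b / (b - a) ^ 4) := by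
        have h2piI : 2 * (π : ℂ) * I ≠ 0 := two_pi_I_ne_zero
        field_simp
    _ = ((-(y1 * ((1 - y2) ^ 2 * h / y2 ^ 3)) *
        ((-(y2 / (h * r)) + 1 / (h * r)) * (-(y2 / (h * r)) + h / r) * -(y2 / (h * r)) /
          (-(y2 / (h * r)) + h / (y2 * r)) ^ 4) : ℝ) : ℂ) := by
        simp only [p, a, b, K, eval_mul, eval_add, eval_X, eval_C]
        push_cast
        ring
    _ = r * ((y1 ^ 2 * y2 ^ 2 * h ^ 2 / (y1 + y2) ^ 4 : ℝ) : ℂ) := by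
        rw [deltaOne_residue_eq y1 y2 h r hy2'.ne' hy2.ne' (by positivity) hh.ne' hr.ne' hh2]
        push_cast
        ring

theorem stmt12 (y1 y2 h : ℝ) (hy1 : 0 < y1) (hy2 : 1 < y2)
    (hpos : 0 < y1 + y2 - y1 * y2) (hh : h = Real.sqrt (y1 + y2 - y1 * y2)) :
    Tendsto (fun r : ℝ =>
      (1 / (2 * (Real.pi : ℂ) * Complex.I)) *
        ∮ ξ in C((0 : ℂ), 1),
          (y1 : ℂ) *
          ((y2 : ℂ) * (1 + (h : ℂ) * (r : ℂ) * ξ) * (1 + (h : ℂ) / ((r : ℂ) * ξ)) /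
            (((y2 : ℂ) + (h : ℂ) * (r : ℂ) * ξ) * ((y2 : ℂ) + (h : ℂ) / ((r : ℂ) * ξ)))) *
          (((1 - y2) ^ 2 * h / y2 ^ 3 : ℝ) : ℂ) *
          (ξ / (ξ + (h : ℂ) / ((y2 : ℂ) * (r : ℂ))) ^ 3))
      (nhdsWithin 1 (Set.Ioi 1))
      (nhds ((y1 ^ 2 * y2 ^ 2 * h ^ 2 / (y1 + y2) ^ 4 : ℝ) : ℂ)) := by
  have hh0 : 0 < h := hh ▸ Real.sqrt_pos.2 hpos
  have hh2 : h ^ 2 = y1 + y2 - y1 * y2 := hh ▸ Real.sq_sqrt hpos.le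
  have hhy2 : 1 < y2 / h := by rw [lt_div_iff₀ hh0]; nlinarith
  have hlin : Continuous fun r : ℝ ↦
      (r : ℂ) * ((y1 ^ 2 * y2 ^ 2 * h ^ 2 / (y1 + y2) ^ 4 : ℝ) : ℂ) := by fun_prop
  refine Tendsto.congr' ?_ ((hlin.tendsto' 1 _ (by simp)).mono_left nhdsWithin_le_nhds)
  filter_upwards [Ioo_mem_nhdsGT hhy2] with r ⟨hr1, hr⟩
  rw [lt_div_iff₀ hh0] at hr
  exact (deltaOne_contour_integral_eq y1 y2 h r hy1 hy2 hh0 hh2 (by linarith) (by nlinarith)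
    (by linarith)).symm
end

section
/- Let y1, y2 > 0 with h = sqrt(y1+y2-y1y2) > 0 and α = y1/y2, and let ρ(x) = (α+1)·sqrt((x_r - x)(x - x_l)) / (2π y1 x(1-x)) on (x_l, x_r), where x_l, x_r = y2(h∓y1)^2/(y1+y2)^2. If y1 ≤ 1 and y2 ≤ 1, then ∫_{x_l}^{x_r} ρ(x) dx = 1. -/
open Real Set MeasureTheory


lemma keyInt (a b : ℝ) (ha : 0 ≤ a) (hab : a < b) (hb : b ≤ 1) :
    IntervalIntegrable (fun x => Real.sqrt ((b - x) * (x - a)) / (x * (1 - x)))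
      volume a b := by
  set m : ℝ := (a + b) / 2 with hm
  have ham : a < m := by rw [hm]; linarith
  have hmb : m < b := by rw [hm]; linarith
  have hm0 : 0 < m := by linarith
  have h1m : 0 < 1 - m := by linarith
  have hmeas : ∀ c d : ℝ, AEStronglyMeasurable
      (fun x => Real.sqrt ((b - x) * (x - a)) / (x * (1 - x)))
      (volume.restrict (Set.uIoc c d)) := by
    intro c d
    apply Measurable.aestronglyMeasurable
    apply Measurable.div
    · exact ((measurable_const.sub measurable_id).mul
        (measurable_id.sub measurable_const)).sqrt
    · exact measurable_id.mul (measurable_const.sub measurable_id)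
  have part1 : IntervalIntegrable (fun x => Real.sqrt ((b - x) * (x - a)) / (x * (1 - x)))
      volume a m := by
    have hg : IntervalIntegrable
        (fun x => (Real.sqrt (b - a) / (1 - m)) * (x - a) ^ (-(1:ℝ)/2)) volume a m := by
      apply IntervalIntegrable.const_mul
      have := (intervalIntegral.intervalIntegrable_rpow'
        (a := 0) (b := m - a) (r := -(1:ℝ)/2) (by norm_num)).comp_sub_right a
      simpa using this
    refine hg.mono_fun' (hmeas a m) ?_
    rw [Set.uIoc_of_le ham.le]
    filter_upwards [MeasureTheory.ae_restrict_mem measurableSet_Ioc] with x hx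
    obtain ⟨hax, hxm⟩ := hx
    have hxa : 0 < x - a := by linarith
    have hx0 : 0 < x := lt_of_le_of_lt ha hax
    have hx1 : x < 1 := lt_of_le_of_lt hxm (lt_of_lt_of_le hmb hb)
    have hbx : 0 < b - x := by linarith
    have h1x : 0 < 1 - x := by linarith
    have hnn : (0:ℝ) ≤ Real.sqrt ((b - x) * (x - a)) / (x * (1 - x)) := by positivity
    show ‖Real.sqrt ((b - x) * (x - a)) / (x * (1 - x))‖ ≤ _
    rw [Real.norm_of_nonneg hnn, Real.sqrt_mul hbx.le]
    calc Real.sqrt (b - x) * Real.sqrt (x - a) / (x * (1 - x))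
        ≤ Real.sqrt (b - a) * Real.sqrt (x - a) / ((x - a) * (1 - m)) := by
          apply div_le_div₀ (by positivity)
            (mul_le_mul_of_nonneg_right (Real.sqrt_le_sqrt (by linarith)) (Real.sqrt_nonneg _))
            (by positivity)
          exact mul_le_mul (by linarith) (by linarith) h1m.le hx0.le
      _ = Real.sqrt (b - a) / (1 - m) * (x - a) ^ (-(1:ℝ)/2) := by
          rw [show (-(1:ℝ)/2) = -(1/2) by norm_num, Real.rpow_neg hxa.le,
            ← Real.sqrt_eq_rpow, ← Real.sqrt_div_self]
          field_simp
  have part2 : IntervalIntegrable (fun x => Real.sqrt ((b - x) * (x - a)) / (x * (1 - x)))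
      volume m b := by
    have hg : IntervalIntegrable
        (fun x => (Real.sqrt (b - a) / m) * (b - x) ^ (-(1:ℝ)/2)) volume m b := by
      apply IntervalIntegrable.const_mul
      have := (intervalIntegral.intervalIntegrable_rpow'
        (a := 0) (b := b - m) (r := -(1:ℝ)/2) (by norm_num)).comp_sub_left b
      simp at this
      exact this.symm
    refine hg.mono_fun' (hmeas m b) ?_
    rw [Set.uIoc_of_le hmb.le]
    filter_upwards [MeasureTheory.ae_restrict_mem measurableSet_Ioc] with x hx
    obtain ⟨hmx, hxb⟩ := hx
    have hbx : (0:ℝ) ≤ b - x := by linarith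
    have hx0 : 0 < x := lt_trans hm0 hmx
    have hx1 : x ≤ 1 := le_trans hxb hb
    have hxa : 0 < x - a := by linarith
    have h1x : 0 ≤ 1 - x := by linarith
    have hnn : (0:ℝ) ≤ Real.sqrt ((b - x) * (x - a)) / (x * (1 - x)) := by positivity
    show ‖Real.sqrt ((b - x) * (x - a)) / (x * (1 - x))‖ ≤ _
    rw [Real.norm_of_nonneg hnn, Real.sqrt_mul hbx]
    rcases eq_or_lt_of_le hxb with rfl | hxb'
    · simp only [sub_self, Real.sqrt_zero, zero_mul, zero_div]
      positivity
    have h1x' : 0 < 1 - x := by linarith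
    have hbx' : 0 < b - x := by linarith
    calc Real.sqrt (b - x) * Real.sqrt (x - a) / (x * (1 - x))
        ≤ Real.sqrt (b - x) * Real.sqrt (b - a) / (m * (b - x)) := by
          apply div_le_div₀ (by positivity)
            (mul_le_mul_of_nonneg_left (Real.sqrt_le_sqrt (by linarith)) (Real.sqrt_nonneg _))
            (by positivity)
          exact mul_le_mul hmx.le (by linarith) hbx hx0.le
      _ = Real.sqrt (b - a) / m * (b - x) ^ (-(1:ℝ)/2) := by
          rw [show (-(1:ℝ)/2) = -(1/2) by norm_num, Real.rpow_neg hbx,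
            ← Real.sqrt_eq_rpow, ← Real.sqrt_div_self]
          field_simp
  exact part1.trans part2

noncomputable def Faux (a b x : ℝ) : ℝ :=
  Real.arcsin ((2*x - a - b)/(b - a))
  - Real.sqrt (a*b) * Real.arcsin (((a+b)*x - 2*(a*b))/((b-a)*x))
  + Real.sqrt ((1-a)*(1-b)) * Real.arcsin (((2-a-b)*(1-x) - 2*((1-a)*(1-b)))/((b-a)*(1-x)))

lemma keyDeriv (a b : ℝ) (ha : 0 ≤ a) (hab : a < b) (hb : b ≤ 1) {x : ℝ}
    (hx : x ∈ Set.Ioo a b) :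
    HasDerivAt (Faux a b) (Real.sqrt ((b - x) * (x - a)) / (x * (1 - x))) x := by
  obtain ⟨hax, hxb⟩ := hx
  have hba : 0 < b - a := by linarith
  have hx0 : 0 < x := lt_of_le_of_lt ha hax
  have hx1 : x < 1 := lt_of_lt_of_le hxb hb
  have hxa : 0 < x - a := by linarith
  have hbx : 0 < b - x := by linarith
  have h1x : 0 < 1 - x := by linarith
  have ha1 : a < 1 := lt_of_lt_of_le hab hb
  have hRpos : 0 < Real.sqrt ((b-x)*(x-a)) := Real.sqrt_pos.2 (by positivity)
  have hR2 : Real.sqrt ((b-x)*(x-a)) ^ 2 = (b-x)*(x-a) := Real.sq_sqrt (by positivity)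
  -- Term 1
  have hu : HasDerivAt (fun y : ℝ => (2*y - a - b)/(b - a)) (2/(b-a)) x := by
    have h1 : HasDerivAt (fun y : ℝ => 2*y - a - b) 2 x := by
      simpa using (((hasDerivAt_id x).const_mul (2:ℝ)).sub_const a).sub_const b
    simpa using h1.div_const (b - a)
  have hu1 : (2*x - a - b)/(b - a) < 1 := by rw [div_lt_one hba]; linarith
  have hun1 : -1 < (2*x - a - b)/(b - a) := by rw [lt_div_iff₀ hba]; linarith
  have harc1 : HasDerivAt (fun y : ℝ => Real.arcsin ((2*y - a - b)/(b - a)))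
      (1 / Real.sqrt (1 - ((2*x - a - b)/(b - a))^2) * (2/(b-a))) x := by
    have := (Real.hasDerivAt_arcsin hun1.ne' hu1.ne).comp x hu
    simpa [Function.comp_def] using this
  have hsu : Real.sqrt (1 - ((2*x - a - b)/(b - a))^2)
      = 2*Real.sqrt ((b-x)*(x-a))/(b-a) := by
    have h4 : (2*Real.sqrt ((b-x)*(x-a))/(b-a))^2 = 4*((b-x)*(x-a))/(b-a)^2 := by
      rw [div_pow, mul_pow, hR2]; norm_num
    rw [show 1 - ((2*x - a - b)/(b - a))^2
        = (2*Real.sqrt ((b-x)*(x-a))/(b-a))^2 by rw [h4]; field_simp; ring]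
    exact Real.sqrt_sq (by positivity)
  -- Term 2
  have harc2 : HasDerivAt (fun y : ℝ =>
      Real.sqrt (a*b) * Real.arcsin (((a+b)*y - 2*(a*b))/((b-a)*y)))
      (a*b/(x*Real.sqrt ((b-x)*(x-a)))) x := by
    rcases eq_or_lt_of_le ha with ha0 | ha0
    · have hz : Real.sqrt (a*b) = 0 := by rw [← ha0]; simp
      simp_rw [hz, zero_mul]
      rw [← ha0]
      simpa using hasDerivAt_const x (0:ℝ)
    · have hb0 : 0 < b := lt_trans ha0 hab
      have hab0 : 0 < a*b := mul_pos ha0 hb0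
      have hden : (b-a)*x ≠ 0 := by positivity
      have hv : HasDerivAt (fun y : ℝ => ((a+b)*y - 2*(a*b))/((b-a)*y))
          (2*(a*b)/((b-a)*x^2)) x := by
        have h1 : HasDerivAt (fun y : ℝ => (a+b)*y - 2*(a*b)) (a+b) x := by
          simpa using ((hasDerivAt_id x).const_mul (a+b)).sub_const (2*(a*b))
        have h2 : HasDerivAt (fun y : ℝ => (b-a)*y) (b-a) x := by
          simpa using (hasDerivAt_id x).const_mul (b-a)
        have := h1.div h2 hden
        refine this.congr_deriv ?_
        field_simp
        ring
      have hvlt : ((a+b)*x - 2*(a*b))/((b-a)*x) < 1 := by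
        rw [div_lt_one (by positivity)]; nlinarith
      have hvgt : -1 < ((a+b)*x - 2*(a*b))/((b-a)*x) := by
        rw [lt_div_iff₀ (by positivity)]; nlinarith
      have hab2 : Real.sqrt (a*b)^2 = a*b := Real.sq_sqrt hab0.le
      have hsv : Real.sqrt (1 - (((a+b)*x - 2*(a*b))/((b-a)*x))^2)
          = 2*Real.sqrt (a*b)*Real.sqrt ((b-x)*(x-a))/((b-a)*x) := by
        have h4 : (2*Real.sqrt (a*b)*Real.sqrt ((b-x)*(x-a))/((b-a)*x))^2
            = 4*(a*b)*((b-x)*(x-a))/((b-a)*x)^2 := by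
          rw [div_pow, mul_pow, mul_pow, hab2, hR2]; norm_num
        rw [show 1 - (((a+b)*x - 2*(a*b))/((b-a)*x))^2
            = (2*Real.sqrt (a*b)*Real.sqrt ((b-x)*(x-a))/((b-a)*x))^2 by
          rw [h4]; field_simp; ring]
        exact Real.sqrt_sq (by positivity)
      have harc := (Real.hasDerivAt_arcsin hvgt.ne' hvlt.ne).comp x hv
      simp only [Function.comp_def] at harc
      have := harc.const_mul (Real.sqrt (a*b))
      refine this.congr_deriv ?_
      rw [hsv]
      have hsab : Real.sqrt (a*b) ≠ 0 := by positivity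
      field_simp
  -- Term 3
  have harc3 : HasDerivAt (fun y : ℝ =>
      Real.sqrt ((1-a)*(1-b)) *
        Real.arcsin (((2-a-b)*(1-y) - 2*((1-a)*(1-b)))/((b-a)*(1-y))))
      (-((1-a)*(1-b)/((1-x)*Real.sqrt ((b-x)*(x-a))))) x := by
    rcases eq_or_lt_of_le hb with hb1 | hb1
    · have hz : Real.sqrt ((1-a)*(1-b)) = 0 := by rw [hb1]; simp
      simp_rw [hz, zero_mul]
      rw [hb1]
      simpa using hasDerivAt_const x (0:ℝ)
    · have h1b : 0 < 1 - b := by linarith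
      have h1a : 0 < 1 - a := by linarith
      have hab0 : 0 < (1-a)*(1-b) := mul_pos h1a h1b
      have hden : (b-a)*(1-x) ≠ 0 := by positivity
      have hw : HasDerivAt (fun y : ℝ => ((2-a-b)*(1-y) - 2*((1-a)*(1-b)))/((b-a)*(1-y)))
          (-(2*((1-a)*(1-b)))/((b-a)*(1-x)^2)) x := by
        have h1 : HasDerivAt (fun y : ℝ => (2-a-b)*(1-y) - 2*((1-a)*(1-b))) (-(2-a-b)) x := by
          have := ((hasDerivAt_id x).const_sub 1).const_mul (2-a-b)
          simpa using this.sub_const (2*((1-a)*(1-b)))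
        have h2 : HasDerivAt (fun y : ℝ => (b-a)*(1-y)) (-(b-a)) x := by
          have := ((hasDerivAt_id x).const_sub 1).const_mul (b-a)
          simpa using this
        have := h1.div h2 hden
        refine this.congr_deriv ?_
        field_simp
        ring
      have hvlt : ((2-a-b)*(1-x) - 2*((1-a)*(1-b)))/((b-a)*(1-x)) < 1 := by
        rw [div_lt_one (by positivity)]; nlinarith
      have hvgt : -1 < ((2-a-b)*(1-x) - 2*((1-a)*(1-b)))/((b-a)*(1-x)) := by
        rw [lt_div_iff₀ (by positivity)]; nlinarith
      have hab2 : Real.sqrt ((1-a)*(1-b))^2 = (1-a)*(1-b) := Real.sq_sqrt hab0.le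
      have hsw : Real.sqrt (1 - (((2-a-b)*(1-x) - 2*((1-a)*(1-b)))/((b-a)*(1-x)))^2)
          = 2*Real.sqrt ((1-a)*(1-b))*Real.sqrt ((b-x)*(x-a))/((b-a)*(1-x)) := by
        have h4 : (2*Real.sqrt ((1-a)*(1-b))*Real.sqrt ((b-x)*(x-a))/((b-a)*(1-x)))^2
            = 4*((1-a)*(1-b))*((b-x)*(x-a))/((b-a)*(1-x))^2 := by
          rw [div_pow, mul_pow, mul_pow, hab2, hR2]; norm_num
        rw [show 1 - (((2-a-b)*(1-x) - 2*((1-a)*(1-b)))/((b-a)*(1-x)))^2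
            = (2*Real.sqrt ((1-a)*(1-b))*Real.sqrt ((b-x)*(x-a))/((b-a)*(1-x)))^2 by
          rw [h4]; field_simp; ring]
        exact Real.sqrt_sq (by positivity)
      have harc := (Real.hasDerivAt_arcsin hvgt.ne' hvlt.ne).comp x hw
      simp only [Function.comp_def] at harc
      have := harc.const_mul (Real.sqrt ((1-a)*(1-b)))
      refine this.congr_deriv ?_
      rw [hsw]
      have hsab : Real.sqrt ((1-a)*(1-b)) ≠ 0 := by positivity
      field_simp
  have hsum := (harc1.sub harc2).add harc3
  set R := Real.sqrt ((b-x)*(x-a)) with hRdef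
  rw [hsu] at hsum
  clear_value R
  have hval : 1 / (2*R/(b-a)) * (2/(b-a)) - a*b/(x*R) + -((1-a)*(1-b)/((1-x)*R))
      = R / (x * (1 - x)) := by
    field_simp
    linear_combination (-1) * hR2
  rw [hval] at hsum
  exact hsum

lemma keyCont (a b : ℝ) (ha : 0 ≤ a) (hab : a < b) (hb : b ≤ 1) :
    ContinuousOn (Faux a b) (Set.Icc a b) := by
  unfold Faux
  apply ContinuousOn.add
  apply ContinuousOn.sub
  · apply Continuous.continuousOn
    exact Real.continuous_arcsin.comp (by continuity)
  · rcases eq_or_lt_of_le ha with ha0 | ha0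
    · simp_rw [← ha0, zero_mul, Real.sqrt_zero, zero_mul]
      exact continuousOn_const
    · apply ContinuousOn.mul continuousOn_const
      apply Real.continuous_arcsin.comp_continuousOn
      apply ContinuousOn.div
      · exact (by continuity : Continuous fun x : ℝ => (a+b)*x - 2*(a*b)).continuousOn
      · exact (by continuity : Continuous fun x : ℝ => (b-a)*x).continuousOn
      · intro x hx
        have : 0 < x := lt_of_lt_of_le ha0 hx.1
        have : 0 < b - a := by linarith
        positivity
  · rcases eq_or_lt_of_le hb with hb1 | hb1
    · rw [hb1]
      simp_rw [sub_self, mul_zero, Real.sqrt_zero, zero_mul]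
      exact continuousOn_const
    · apply ContinuousOn.mul continuousOn_const
      apply Real.continuous_arcsin.comp_continuousOn
      apply ContinuousOn.div
      · exact (by continuity : Continuous fun x : ℝ => (2-a-b)*(1-x) - 2*((1-a)*(1-b))).continuousOn
      · exact (by continuity : Continuous fun x : ℝ => (b-a)*(1-x)).continuousOn
      · intro x hx
        have h1 : 0 < 1 - x := by
          have := hx.2; simp at this ⊢; linarith
        have : 0 < b - a := by linarith
        positivity

lemma keyIntegral (a b : ℝ) (ha : 0 ≤ a) (hab : a < b) (hb : b ≤ 1)
    (hInt : IntervalIntegrable (fun x => Real.sqrt ((b - x) * (x - a)) / (x * (1 - x)))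
      volume a b)
    (hDeriv : ∀ x ∈ Set.Ioo a b,
      HasDerivAt (Faux a b) (Real.sqrt ((b - x) * (x - a)) / (x * (1 - x))) x) :
    ∫ x in a..b, Real.sqrt ((b - x) * (x - a)) / (x * (1 - x))
      = Real.pi * (1 - Real.sqrt (a*b) - Real.sqrt ((1-a)*(1-b))) := by
  have hba : b - a ≠ 0 := by intro hz; linarith [hz]
  have hba' : (0:ℝ) < b - a := by linarith
  have hb0 : 0 < b := lt_of_le_of_lt ha hab
  have ha1 : a < 1 := lt_of_lt_of_le hab hb
  have hFb : Faux a b b = π/2 - Real.sqrt (a*b) * (π/2) - Real.sqrt ((1-a)*(1-b)) * (π/2) := by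
    unfold Faux
    rw [show (2*b - a - b) = b - a by ring, div_self hba, Real.arcsin_one]
    rw [show ((a+b)*b - 2*(a*b)) = (b-a)*b by ring,
      div_self (mul_pos hba' hb0).ne', Real.arcsin_one]
    rcases eq_or_lt_of_le hb with hb1 | hb1
    · rw [hb1]
      simp_rw [sub_self, mul_zero, Real.sqrt_zero, zero_mul]
      ring
    · have h1b : 0 < 1 - b := by linarith
      rw [show ((2-a-b)*(1-b) - 2*((1-a)*(1-b))) = -((b-a)*(1-b)) by ring,
        neg_div, div_self (mul_pos hba' h1b).ne', Real.arcsin_neg_one]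
      ring
  have hFa : Faux a b a = -(π/2) + Real.sqrt (a*b) * (π/2) + Real.sqrt ((1-a)*(1-b)) * (π/2) := by
    unfold Faux
    rw [show (2*a - a - b) = -(b - a) by ring, neg_div, div_self hba, Real.arcsin_neg_one]
    rw [show ((2-a-b)*(1-a) - 2*((1-a)*(1-b))) = (b-a)*(1-a) by ring,
      div_self (mul_pos hba' (by linarith : (0:ℝ) < 1 - a)).ne', Real.arcsin_one]
    rcases eq_or_lt_of_le ha with ha0 | ha0
    · rw [← ha0]
      simp_rw [zero_mul, Real.sqrt_zero, zero_mul]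
      ring
    · rw [show ((a+b)*a - 2*(a*b)) = -((b-a)*a) by ring,
        neg_div, div_self (mul_pos hba' ha0).ne', Real.arcsin_neg_one]
      ring
  rw [intervalIntegral.integral_eq_sub_of_hasDeriv_right_of_le hab.le
    (keyCont a b ha hab hb)
    (fun x hx => (hDeriv x hx).hasDerivWithinAt) hInt]
  rw [hFb, hFa]
  ring

theorem stmt19 (y1 y2 h α xl xr : ℝ) (hy1 : 0 < y1) (hy2 : 0 < y2)
    (hy1le : y1 ≤ 1) (hy2le : y2 ≤ 1)
    (hpos : 0 < y1 + y2 - y1 * y2) (hh : h = Real.sqrt (y1 + y2 - y1 * y2))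
    (hα : α = y1 / y2)
    (hxl : xl = y2 * (h - y1) ^ 2 / (y1 + y2) ^ 2)
    (hxr : xr = y2 * (h + y1) ^ 2 / (y1 + y2) ^ 2) :
    ∫ x in xl..xr,
      (α + 1) * Real.sqrt ((xr - x) * (x - xl)) / (2 * Real.pi * y1 * x * (1 - x)) = 1 := by
  have hsum : (0:ℝ) < y1 + y2 := by linarith
  have hh2 : h^2 = y1 + y2 - y1*y2 := by rw [hh]; exact Real.sq_sqrt hpos.le
  have hhpos : 0 < h := by rw [hh]; exact Real.sqrt_pos.2 hpos
  have h1y1 : (0:ℝ) ≤ 1 - y1 := by linarith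
  have h1y2 : (0:ℝ) ≤ 1 - y2 := by linarith
  have hxl0 : 0 ≤ xl := by rw [hxl]; positivity
  have hxlr : xl < xr := by
    have hd : xr - xl = 4*y2*h*y1/(y1+y2)^2 := by rw [hxl, hxr]; ring
    have : 0 < 4*y2*h*y1/(y1+y2)^2 := by positivity
    linarith
  have hxr1 : xr ≤ 1 := by
    rw [hxr, div_le_one (by positivity)]
    nlinarith [mul_nonneg hy1.le (sq_nonneg (h-y2))]
  have e1 : Real.sqrt (xl*xr) = y2*(1-y1)/(y1+y2) := by
    rw [show xl*xr = (y2*(1-y1)/(y1+y2))^2 by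
      rw [hxl, hxr]; field_simp
      linear_combination (h^2+(y1+y2-y1*y2)-2*y1^2) * hh2]
    exact Real.sqrt_sq (by positivity)
  have e2 : Real.sqrt ((1-xl)*(1-xr)) = y1*(1-y2)/(y1+y2) := by
    rw [show (1-xl)*(1-xr) = (y1*(1-y2)/(y1+y2))^2 by
      rw [hxl, hxr]; field_simp
      linear_combination (-y2*(2*((y1+y2)^2 - y2*y1^2) - y2*(h^2+(y1+y2-y1*y2))) - 4*y1^2*y2^2) * hh2]
    exact Real.sqrt_sq (by positivity)
  calc ∫ x in xl..xr,
      (α + 1) * Real.sqrt ((xr - x) * (x - xl)) / (2 * Real.pi * y1 * x * (1 - x))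
      = ∫ x in xl..xr,
        ((α + 1)/(2 * Real.pi * y1)) * (Real.sqrt ((xr - x) * (x - xl)) / (x * (1 - x))) := by
        apply intervalIntegral.integral_congr
        intro x _
        beta_reduce
        rw [div_mul_div_comm, ← mul_assoc]
    _ = ((α + 1)/(2 * Real.pi * y1)) *
        ∫ x in xl..xr, Real.sqrt ((xr - x) * (x - xl)) / (x * (1 - x)) := by
        rw [intervalIntegral.integral_const_mul]
    _ = ((α + 1)/(2 * Real.pi * y1)) *
        (Real.pi * (1 - Real.sqrt (xl*xr) - Real.sqrt ((1-xl)*(1-xr)))) := by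
        rw [keyIntegral xl xr hxl0 hxlr hxr1 (keyInt xl xr hxl0 hxlr hxr1)
          (fun x hx => keyDeriv xl xr hxl0 hxlr hxr1 hx)]
    _ = 1 := by
        rw [e1, e2, hα]
        field_simp
        ring
end
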